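/- Let Λ₀ and Λ₁ be real d×d matrices with Λ₁ invertible, and suppose that for every integer vector z ∈ ℤ^d one has ‖Λ₀ z‖ ≤ ‖Λ₁ z‖ in the Euclidean norm. Then the matrix Λ₁ᵀ·Λ₁ − Λ₀ᵀ·Λ₀ is positive semidefinite. -/

import Mathlib

/-! The quadratic form `x ↦ ‖Λ₁ x‖² - ‖Λ₀ x‖²` is continuous and homogeneous of degree two, so
its nonnegativity on `ℤ^d` propagates to the points `n⁻¹ • z`, and these approximate every
`x ∈ ℝ^d` via `n⁻¹ • round (n • x) → x`. -/

open scoped Matrix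

/-- The Euclidean norm of a vector in `ℝ^d`. -/
noncomputable def euclNorm {d : ℕ} (v : Fin d → ℝ) : ℝ :=
  ‖(EuclideanSpace.equiv (Fin d) ℝ).symm v‖

open Filter Topology

lemma tendsto_round_mul_div_atTop (y : ℝ) :
    Tendsto (fun n : ℕ => (round (n * y) : ℝ) / n) atTop (𝓝 y) := by
  rw [tendsto_iff_norm_sub_tendsto_zero]
  refine squeeze_zero_norm' ?_ (tendsto_inv_atTop_zero.comp tendsto_natCast_atTop_atTop)
  filter_upwards [eventually_gt_atTop 0] with n hn
  have hn : (0 : ℝ) < n := Nat.cast_pos.mpr hn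
  have hround : |(round (n * y) : ℝ) - n * y| ≤ 1 / 2 := by
    rw [abs_sub_comm]; exact abs_sub_round _
  calc ‖‖(round (n * y) : ℝ) / n - y‖‖ = |(round (n * y) : ℝ) - n * y| / n := by
        rw [norm_norm, Real.norm_eq_abs, ← abs_of_pos hn, ← abs_div, abs_of_pos hn]
        congr 1; field_simp
    _ ≤ (1 / 2) / n := by gcongr
    _ ≤ (n : ℝ)⁻¹ := by rw [div_le_iff₀ hn]; field_simp; norm_num

lemma tendsto_inv_smul_round_mul_atTop {ι : Type*} (x : ι → ℝ) :
    Tendsto (fun n : ℕ => (n : ℝ)⁻¹ • fun i => (round (n * x i) : ℝ)) atTop (𝓝 x) := by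
  refine tendsto_pi_nhds.mpr fun i => ?_
  simpa [inv_mul_eq_div] using tendsto_round_mul_div_atTop (x i)

lemma mem_of_isClosed_of_smul_mem_of_intCast_mem {ι : Type*} {S : Set (ι → ℝ)}
    (hS : IsClosed S) (hsmul : ∀ (c : ℝ) (v : ι → ℝ), v ∈ S → c • v ∈ S)
    (hint : ∀ z : ι → ℤ, (fun i => (z i : ℝ)) ∈ S) (x : ι → ℝ) : x ∈ S :=
  hS.mem_of_tendsto (tendsto_inv_smul_round_mul_atTop x)
    (Eventually.of_forall fun _ => hsmul _ _ (hint _))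

lemma Matrix.PosSemidef.of_intCast_dotProduct_mulVec_nonneg {ι : Type*} [Fintype ι]
    {M : Matrix ι ι ℝ} (hM : M.IsHermitian)
    (hint : ∀ z : ι → ℤ, 0 ≤ (fun i => (z i : ℝ)) ⬝ᵥ M *ᵥ fun i => (z i : ℝ)) :
    M.PosSemidef := by
  refine .of_dotProduct_mulVec_nonneg hM fun x => ?_
  refine mem_of_isClosed_of_smul_mem_of_intCast_mem (S := {x | 0 ≤ x ⬝ᵥ M *ᵥ x}) ?_
    (fun c v hv => ?_) hint x
  · exact isClosed_le continuous_const
      (continuous_id.dotProduct (continuous_const.matrix_mulVec continuous_id))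
  · simp only [Set.mem_ofPred_eq, Matrix.mulVec_smul, smul_dotProduct, dotProduct_smul,
      smul_eq_mul, ← mul_assoc] at hv ⊢
    exact mul_nonneg (mul_self_nonneg c) hv

lemma Matrix.dotProduct_transpose_mul_self_mulVec {m n R : Type*} [Fintype m] [Fintype n]
    [CommSemiring R] (A : Matrix m n R) (x : n → R) : x ⬝ᵥ (Aᵀ * A) *ᵥ x = A *ᵥ x ⬝ᵥ A *ᵥ x := by
  rw [← Matrix.mulVec_mulVec, Matrix.dotProduct_mulVec, Matrix.vecMul_transpose]

lemma euclNorm_sq {d : ℕ} (v : Fin d → ℝ) : euclNorm v ^ 2 = v ⬝ᵥ v := by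
  rw [euclNorm, EuclideanSpace.norm_eq, Real.sq_sqrt (by positivity)]
  simp [dotProduct, sq]

theorem stmt_8_general (d : ℕ) (Λ₀ Λ₁ : Matrix (Fin d) (Fin d) ℝ)
    (h : ∀ z : Fin d → ℤ,
      euclNorm (Λ₀.mulVec fun i => (z i : ℝ)) ≤ euclNorm (Λ₁.mulVec fun i => (z i : ℝ))) :
    (Λ₁ᵀ * Λ₁ - Λ₀ᵀ * Λ₀).PosSemidef := by
  refine .of_intCast_dotProduct_mulVec_nonneg
    ((Matrix.isHermitian_conjTranspose_mul_self Λ₁).sub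
      (Matrix.isHermitian_conjTranspose_mul_self Λ₀))
    fun z => ?_
  have hsq := pow_le_pow_left₀ (norm_nonneg _) (h z) 2
  rw [Matrix.sub_mulVec, dotProduct_sub, Matrix.dotProduct_transpose_mul_self_mulVec,
    Matrix.dotProduct_transpose_mul_self_mulVec, ← euclNorm_sq, ← euclNorm_sq]
  exact sub_nonneg.mpr hsq

/-- If `Λ₁` is invertible and `‖Λ₀ z‖ ≤ ‖Λ₁ z‖` for every integer vector
`z ∈ ℤ^d`, then `Λ₁ᵀ·Λ₁ − Λ₀ᵀ·Λ₀` is positive semidefinite. -/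
theorem stmt_8 (d : ℕ) (Λ₀ Λ₁ : Matrix (Fin d) (Fin d) ℝ) (h₁ : IsUnit Λ₁.det)
    (h : ∀ z : Fin d → ℤ,
      euclNorm (Λ₀.mulVec fun i => (z i : ℝ)) ≤ euclNorm (Λ₁.mulVec fun i => (z i : ℝ))) :
    (Λ₁ᵀ * Λ₁ - Λ₀ᵀ * Λ₀).PosSemidef :=
  stmt_8_general d Λ₀ Λ₁ h
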